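/- With uniform probability on all C(m,g) possible g-subsets arriving at each independent step, the expected number of groups needed to collect all m coupon types equals Σ_{k=1}^{m−g} (-1)^{k+1} C(m,k)/(1 − C(m−k,g)/C(m,g)) + Σ_{k=1}^{g} (-1)^{m−g+k+1} C(m, m−g+k). -/

import Mathlib

/-!
Let `T` be the completion time. `T > n` exactly when some element is missed by the first `n`
groups. A single group avoids `j` given elements with probability `q_j = C(m-j,g)/C(m,g)`, so by
independence and inclusion–exclusion over the missed elements,
`P(T > n) = ∑_{j ≥ 1} (-1)^(j+1) C(m,j) q_j^n`. Summing tail probabilities gives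
`E T = ∑_j (-1)^(j+1) C(m,j) / (1 - q_j)`; since `g ≥ 1` every `q_j < 1`, and for `j > m - g` we
have `q_j = 0`, which produces the second sum.
-/

open Finset MeasureTheory ProbabilityTheory
open scoped ENNReal

namespace MeasureTheory

variable {α : Type*} [MeasurableSpace α] {μ : Measure α}

theorem nullMeasurableSet_of_measure_add_measure_compl_le [IsFiniteMeasure μ] {s : Set α}
    (h : μ s + μ sᶜ ≤ μ Set.univ) : NullMeasurableSet s μ := by
  set t := toMeasurable μ s
  set t' := toMeasurable μ sᶜ
  have hcover : t ∪ t' = Set.univ := Set.eq_univ_of_forall fun a =>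
    (em (a ∈ s)).imp (subset_toMeasurable μ s ·) (subset_toMeasurable μ sᶜ ·)
  have hoverlap : μ (t ∩ t') = 0 := by
    have h' := measure_union_add_inter (μ := μ) t (measurableSet_toMeasurable μ sᶜ)
    rw [hcover, measure_toMeasurable, measure_toMeasurable] at h'
    exact nonpos_iff_eq_zero.1 <| ENNReal.le_of_add_le_add_left (measure_ne_top μ _)
      (by rw [add_zero, h']; exact h)
  refine (measurableSet_toMeasurable μ s).nullMeasurableSet.congr
    (ae_eq_set.2 ⟨measure_mono_null ?_ hoverlap, ?_⟩)
  · exact fun a ha => ⟨ha.1, subset_toMeasurable μ sᶜ ha.2⟩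
  · simp [Set.sdiff_eq_empty.2 (subset_toMeasurable μ s)]

section Uniform

variable [IsProbabilityMeasure μ] {β : Type*} {Y : α → β} {s : Finset β}

/-- The fibres over `s` already carry the whole mass, so each of them is null measurable even
when `Y` is not measurable. -/
theorem nullMeasurableSet_preimage_singleton_of_uniform (hYs : ∀ a, Y a ∈ s)
    (hY : ∀ b ∈ s, μ (Y ⁻¹' {b}) = (#s : ℝ≥0∞)⁻¹) (b : β) :
    NullMeasurableSet (Y ⁻¹' {b}) μ := by
  classical
  by_cases hb : b ∈ s
  · refine nullMeasurableSet_of_measure_add_measure_compl_le ?_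
    have hcompl : (Y ⁻¹' {b})ᶜ ⊆ ⋃ b' ∈ s.erase b, Y ⁻¹' {b'} := fun a ha =>
      Set.mem_biUnion (mem_erase.2 ⟨ha, hYs a⟩) rfl
    calc μ (Y ⁻¹' {b}) + μ (Y ⁻¹' {b})ᶜ
        ≤ μ (Y ⁻¹' {b}) + ∑ b' ∈ s.erase b, μ (Y ⁻¹' {b'}) :=
          add_le_add_right ((measure_mono hcompl).trans (measure_biUnion_finset_le _ _)) _
      _ = ∑ b' ∈ s, μ (Y ⁻¹' {b'}) := add_sum_erase s (fun b' => μ (Y ⁻¹' {b'})) hb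
      _ = μ Set.univ := by
          rw [sum_congr rfl hY, sum_const, nsmul_eq_mul, measure_univ,
            ENNReal.mul_inv_cancel (Nat.cast_ne_zero.2 (card_ne_zero_of_mem hb)) (by simp)]
  · have hempty : Y ⁻¹' {b} = ∅ := Set.eq_empty_of_forall_notMem fun a ha => hb (ha ▸ hYs a)
    simp [hempty]

theorem nullMeasurableSet_preimage_of_uniform (hYs : ∀ a, Y a ∈ s)
    (hY : ∀ b ∈ s, μ (Y ⁻¹' {b}) = (#s : ℝ≥0∞)⁻¹) (t : Set β) :
    NullMeasurableSet (Y ⁻¹' t) μ := by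
  have hpre : Y ⁻¹' t = Y ⁻¹' (t ∩ s) := by ext a; simp [hYs a]
  rw [hpre, ← Set.biUnion_preimage_singleton]
  exact .biUnion (s.finite_toSet.inter_of_right t).countable fun b _ =>
    nullMeasurableSet_preimage_singleton_of_uniform hYs hY b

theorem measure_preimage_of_uniform (hYs : ∀ a, Y a ∈ s)
    (hY : ∀ b ∈ s, μ (Y ⁻¹' {b}) = (#s : ℝ≥0∞)⁻¹) (t : Set β) [DecidablePred (· ∈ t)] :
    μ (Y ⁻¹' t) = #{b ∈ s | b ∈ t} / #s := by
  have hpre : Y ⁻¹' t = ⋃ b ∈ {b ∈ s | b ∈ t}, Y ⁻¹' {b} := by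
    ext a
    simp only [Set.mem_preimage, Set.mem_iUnion, Set.mem_singleton_iff, mem_filter]
    exact ⟨fun ha => ⟨Y a, ⟨hYs a, ha⟩, rfl⟩, by rintro ⟨b, ⟨-, hb⟩, rfl⟩; exact hb⟩
  rw [hpre, measure_biUnion_finset₀
      (fun b _ b' _ hbb' => (Set.disjoint_singleton.2 hbb').preimage Y |>.aedisjoint)
      (fun b _ => nullMeasurableSet_preimage_singleton_of_uniform hYs hY b),
    sum_congr rfl fun b hb => hY b (mem_filter.1 hb).1, sum_const, nsmul_eq_mul, div_eq_mul_inv]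

end Uniform

theorem measureReal_biUnion_eq_sum_powerset₀ [IsFiniteMeasure μ] {ι : Type*} {t : Finset ι}
    {s : ι → Set α} (hs : ∀ i, NullMeasurableSet (s i) μ) :
    μ.real (⋃ i ∈ t, s i) = ∑ u ∈ t.powerset with u.Nonempty,
      (-1 : ℝ) ^ (#u + 1) * μ.real (⋂ i ∈ u, s i) := by
  have hae : ∀ i, toMeasurable μ (s i) =ᵐ[μ] s i := fun i => (hs i).toMeasurable_ae_eq
  have hunion : ⋃ i ∈ t, toMeasurable μ (s i) =ᵐ[μ] ⋃ i ∈ t, s i :=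
    Filter.EventuallyEq.countable_bUnion t.countable_toSet fun i _ => hae i
  rw [← measureReal_congr hunion,
    measureReal_biUnion_eq_sum_powerset fun i _ => measurableSet_toMeasurable μ (s i)]
  refine sum_congr rfl fun u _ => ?_
  have hinter : ⋂ i ∈ u, toMeasurable μ (s i) =ᵐ[μ] ⋂ i ∈ u, s i :=
    Filter.EventuallyEq.countable_bInter u.countable_toSet fun i _ => hae i
  rw [measureReal_congr hinter]

theorem measureReal_iUnion_eq_sum_choose [IsFiniteMeasure μ] {ι : Type*} [Fintype ι]
    {s : ι → Set α} (hs : ∀ i, NullMeasurableSet (s i) μ) (q : ℕ → ℝ)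
    (hq : ∀ u : Finset ι, μ.real (⋂ i ∈ u, s i) = q #u) :
    μ.real (⋃ i, s i) = ∑ j ∈ Icc 1 (Fintype.card ι),
      (-1 : ℝ) ^ (j + 1) * (Fintype.card ι).choose j * q j := by
  have hunion : ⋃ i, s i = ⋃ i ∈ (univ : Finset ι), s i := by simp
  rw [hunion, measureReal_biUnion_eq_sum_powerset₀ hs, sum_filter]
  simp_rw [hq, ← card_pos]
  rw [sum_powerset_apply_card (fun j => if 0 < j then (-1 : ℝ) ^ (j + 1) * q j else 0),
    card_univ]
  simp only [smul_ite, smul_zero]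
  rw [← sum_filter]
  have hsupp : {j ∈ range (Fintype.card ι + 1) | 0 < j} = Icc 1 (Fintype.card ι) := by
    ext j; simp only [mem_filter, mem_range, mem_Icc]; omega
  rw [hsupp]
  refine sum_congr rfl fun j _ => ?_
  rw [nsmul_eq_mul]
  ring

theorem lintegral_natCast_eq_tsum_measure_lt {X : α → ℕ}
    (hX : ∀ n, NullMeasurableSet {a | n < X a} μ) :
    ∫⁻ a, (X a : ℝ≥0∞) ∂μ = ∑' n, μ {a | n < X a} := by
  have hX_eq : ∀ a, (X a : ℝ≥0∞) = ∑' n, {b | n < X b}.indicator (fun _ => 1) a := by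
    intro a
    rw [tsum_eq_sum (s := range (X a)) fun n hn => by simpa using hn,
      sum_congr rfl fun n hn => Set.indicator_of_mem (s := {b | n < X b}) (mem_range.1 hn) _]
    simp
  simp_rw [hX_eq]
  rw [lintegral_tsum fun n => aemeasurable_one.indicator₀ (hX n)]
  exact tsum_congr fun n => by rw [lintegral_indicator_const₀ (hX n), one_mul]

theorem integral_natCast_eq_tsum_measureReal_lt [IsFiniteMeasure μ] {X : α → ℕ}
    (hX : ∀ n, NullMeasurableSet {a | n < X a} μ) :
    ∫ a, (X a : ℝ) ∂μ = ∑' n, μ.real {a | n < X a} := by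
  have hXm : NullMeasurable X μ := measurable_of_Ioi hX
  have hXm' : AEStronglyMeasurable (fun a => (X a : ℝ)) μ :=
    (measurable_from_top.comp_aemeasurable hXm.aemeasurable).aestronglyMeasurable
  rw [integral_eq_lintegral_of_nonneg_ae (.of_forall fun a => by positivity) hXm']
  simp_rw [ENNReal.ofReal_natCast, lintegral_natCast_eq_tsum_measure_lt hX, measureReal_def]
  exact ENNReal.tsum_toReal_eq fun n => measure_ne_top μ _

end MeasureTheory

theorem Nat.lt_sInf_iff_not_of_monotone {P : ℕ → Prop} (hP : Monotone P) (h : ∃ k, P k)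
    {n : ℕ} : n < sInf {k | P k} ↔ ¬ P n :=
  ⟨fun hn hPn => hn.not_ge (Nat.sInf_le hPn),
    fun hn => not_le.1 fun hle => hn (hP hle (Nat.sInf_mem h))⟩

theorem Nat.choose_sub_lt_choose {m g j : ℕ} (hg : 1 ≤ g) (hgm : g ≤ m) (hj : 1 ≤ j) :
    (m - j).choose g < m.choose g := by
  have hpascal := Nat.choose_eq_choose_pred_add (n := m) (k := g) (by omega) (by omega)
  have hpos : 0 < (m - 1).choose (g - 1) := Nat.choose_pos (by omega)
  have hle : (m - j).choose g ≤ (m - 1).choose g := Nat.choose_le_choose g (by omega)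
  omega

theorem Nat.choose_sub_div_choose_mem_Ico {m g j : ℕ} (hg : 1 ≤ g) (hgm : g ≤ m) (hj : 1 ≤ j) :
    ((m - j).choose g : ℝ) / m.choose g ∈ Set.Ico 0 1 := by
  have hN : (0 : ℝ) < m.choose g := by exact_mod_cast Nat.choose_pos hgm
  refine ⟨by positivity, (div_lt_one hN).2 ?_⟩
  exact_mod_cast Nat.choose_sub_lt_choose hg hgm hj

theorem Finset.sum_Icc_one_eq_add_sum_Icc_one {M : Type*} [AddCommMonoid M] (f : ℕ → M)
    {a b : ℕ} (hab : a ≤ b) :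
    ∑ j ∈ Icc 1 b, f j = ∑ j ∈ Icc 1 a, f j + ∑ k ∈ Icc 1 (b - a), f (a + k) := by
  have hIoc : ∀ c, Icc 1 c = Ioc 0 c := fun c => Icc_add_one_left_eq_Ioc 0 c
  have hshift : (Icc 1 (b - a)).map (addLeftEmbedding a) = Ioc a b := by
    rw [map_add_left_Icc, Nat.add_sub_cancel' hab, Icc_add_one_left_eq_Ioc]
  have hsum : ∑ k ∈ Icc 1 (b - a), f (a + k) = ∑ j ∈ Ioc a b, f j := by
    rw [← hshift, sum_map]
    rfl
  rw [hsum, hIoc, hIoc]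
  exact (sum_Ioc_consecutive f (Nat.zero_le a) hab).symm

namespace GroupCouponCollector

variable {Ω : Type*} {m g : ℕ}

/-- Steps are numbered from `1`; the group `G 0` is never drawn. -/
def IsCovered (G : ℕ → Ω → Finset (Fin m)) (n : ℕ) (ω : Ω) : Prop :=
  ∀ i, ∃ k, 1 ≤ k ∧ k ≤ n ∧ i ∈ G k ω

def missedBy (G : ℕ → Ω → Finset (Fin m)) (i : Fin m) (n : ℕ) : Set Ω :=
  {ω | ∀ k ∈ Icc 1 n, i ∉ G k ω}

structure IsUniformGroupSequence [MeasurableSpace Ω] (μ : Measure Ω) (g : ℕ)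
    (G : ℕ → Ω → Finset (Fin m)) : Prop where
  card_eq : ∀ n ω, #(G n ω) = g
  indep : iIndepFun (m := fun _ => (⊤ : MeasurableSpace (Finset (Fin m)))) G μ
  measure_eq : ∀ n, 1 ≤ n → ∀ A : Finset (Fin m), #A = g →
    μ {ω | G n ω = A} = (m.choose g : ℝ≥0∞)⁻¹

section Combinatorics

variable (G : ℕ → Ω → Finset (Fin m))

theorem isCovered_mono (ω : Ω) : Monotone fun n => IsCovered G n ω :=
  fun _ _ hle hcov i => (hcov i).imp fun _ ⟨h1, hk, hi⟩ => ⟨h1, hk.trans hle, hi⟩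

theorem not_isCovered_zero (hm : 0 < m) (ω : Ω) : ¬ IsCovered G 0 ω := fun hcov => by
  obtain ⟨k, h1, h0, -⟩ := hcov ⟨0, hm⟩
  omega

theorem setOf_not_isCovered (n : ℕ) : {ω | ¬ IsCovered G n ω} = ⋃ i, missedBy G i n := by
  ext ω
  simp [IsCovered, missedBy, and_imp]

theorem biInter_missedBy (S : Finset (Fin m)) (n : ℕ) :
    ⋂ i ∈ S, missedBy G i n = ⋂ k ∈ Icc 1 n, G k ⁻¹' {A | A ⊆ Sᶜ} := by
  ext ω
  simp only [missedBy, Set.mem_iInter, Set.mem_ofPred_eq, Set.mem_preimage, subset_iff, mem_compl]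
  exact ⟨fun h k hk i hiG hiS => h i hiS k hk hiG, fun h i hiS k hk hiG => h k hk hiG hiS⟩

end Combinatorics

variable [MeasurableSpace Ω] {μ : Measure Ω} {G : ℕ → Ω → Finset (Fin m)}

namespace IsUniformGroupSequence

theorem mem_powersetCard_univ (hG : IsUniformGroupSequence μ g G) (k : ℕ) (ω : Ω) :
    G k ω ∈ powersetCard g univ :=
  mem_powersetCard.2 ⟨subset_univ _, hG.card_eq k ω⟩

theorem measure_preimage_singleton (hG : IsUniformGroupSequence μ g G) {k : ℕ} (hk : 1 ≤ k) :
    ∀ A ∈ powersetCard g (univ : Finset (Fin m)),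
      μ (G k ⁻¹' {A}) = (#(powersetCard g (univ : Finset (Fin m))) : ℝ≥0∞)⁻¹ := by
  intro A hA
  rw [card_powersetCard, card_univ, Fintype.card_fin]
  exact hG.measure_eq k hk A (mem_powersetCard.1 hA).2

variable [IsProbabilityMeasure μ]

theorem nullMeasurableSet_missedBy (hG : IsUniformGroupSequence μ g G) (i : Fin m) (n : ℕ) :
    NullMeasurableSet (missedBy G i n) μ := by
  have hmissed : missedBy G i n = ⋂ k ∈ Icc 1 n, G k ⁻¹' {A | i ∉ A} := by
    ext ω; simp [missedBy]
  rw [hmissed]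
  exact .biInter (Icc 1 n).countable_toSet fun k hk =>
    nullMeasurableSet_preimage_of_uniform (hG.mem_powersetCard_univ k)
      (hG.measure_preimage_singleton (mem_Icc.1 hk).1) _

theorem nullMeasurableSet_not_isCovered (hG : IsUniformGroupSequence μ g G) (n : ℕ) :
    NullMeasurableSet {ω | ¬ IsCovered G n ω} μ := by
  rw [setOf_not_isCovered]
  exact .iUnion fun i => hG.nullMeasurableSet_missedBy i n

theorem measureReal_biInter_missedBy (hG : IsUniformGroupSequence μ g G)
    (S : Finset (Fin m)) (n : ℕ) :
    μ.real (⋂ i ∈ S, missedBy G i n) = (((m - #S).choose g : ℝ) / m.choose g) ^ n := by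
  have hstep : ∀ k ∈ Icc 1 n, μ (G k ⁻¹' {A | A ⊆ Sᶜ}) = (m - #S).choose g / m.choose g := by
    intro k hk
    rw [measure_preimage_of_uniform (hG.mem_powersetCard_univ k)
      (hG.measure_preimage_singleton (mem_Icc.1 hk).1)]
    have hfilter : {A ∈ powersetCard g (univ : Finset (Fin m)) | A ∈ {A | A ⊆ Sᶜ}} =
        powersetCard g Sᶜ := by
      ext A; simp [mem_powersetCard, and_comm]
    rw [hfilter, card_powersetCard, card_powersetCard, card_compl, card_univ, Fintype.card_fin]
  rw [biInter_missedBy, measureReal_def,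
    hG.indep.measure_inter_preimage_eq_mul (Icc 1 n) fun _ _ => trivial,
    prod_congr rfl hstep, prod_const, Nat.card_Icc, Nat.add_sub_cancel, ENNReal.toReal_pow,
    ENNReal.toReal_div]
  simp

theorem measureReal_not_isCovered (hG : IsUniformGroupSequence μ g G) (n : ℕ) :
    μ.real {ω | ¬ IsCovered G n ω} = ∑ j ∈ Icc 1 m,
      (-1 : ℝ) ^ (j + 1) * m.choose j * (((m - j).choose g : ℝ) / m.choose g) ^ n := by
  rw [setOf_not_isCovered, measureReal_iUnion_eq_sum_choose (hG.nullMeasurableSet_missedBy · n)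
    (fun j => (((m - j).choose g : ℝ) / m.choose g) ^ n)
    (hG.measureReal_biInter_missedBy · n), Fintype.card_fin]

theorem measure_setOf_forall_not_isCovered (hG : IsUniformGroupSequence μ g G) (hg : 1 ≤ g)
    (hgm : g ≤ m) : μ {ω | ∀ n, ¬ IsCovered G n ω} = 0 := by
  have hlim : Filter.Tendsto (fun n => μ.real {ω | ¬ IsCovered G n ω}) .atTop (nhds 0) := by
    simp_rw [hG.measureReal_not_isCovered]
    rw [← sum_const_zero (s := Icc 1 m)]
    refine tendsto_finsetSum _ fun j hj => ?_
    obtain ⟨h0, h1⟩ := Nat.choose_sub_div_choose_mem_Ico hg hgm (mem_Icc.1 hj).1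
    simpa using (tendsto_pow_atTop_nhds_zero_of_lt_one h0 h1).const_mul _
  have hle : ∀ n, μ.real {ω | ∀ n, ¬ IsCovered G n ω} ≤ μ.real {ω | ¬ IsCovered G n ω} :=
    fun n => measureReal_mono fun ω hω => hω n
  exact (measureReal_eq_zero_iff (measure_ne_top μ _)).1 <|
    le_antisymm (ge_of_tendsto' hlim hle) measureReal_nonneg

theorem tsum_measureReal_not_isCovered (hG : IsUniformGroupSequence μ g G) (hg : 1 ≤ g)
    (hgm : g ≤ m) :
    ∑' n, μ.real {ω | ¬ IsCovered G n ω} = ∑ j ∈ Icc 1 m,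
      (-1 : ℝ) ^ (j + 1) * m.choose j / (1 - ((m - j).choose g : ℝ) / m.choose g) := by
  have hgeom : ∀ j ∈ Icc 1 m, HasSum (fun n => (((m - j).choose g : ℝ) / m.choose g) ^ n)
      (1 - ((m - j).choose g : ℝ) / m.choose g)⁻¹ := fun j hj =>
    have hq := Nat.choose_sub_div_choose_mem_Ico hg hgm (mem_Icc.1 hj).1
    hasSum_geometric_of_lt_one hq.1 hq.2
  simp_rw [hG.measureReal_not_isCovered]
  refine (hasSum_sum fun j hj => (hgeom j hj).mul_left _).tsum_eq.trans ?_
  simp_rw [div_eq_mul_inv]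

end IsUniformGroupSequence

/-- The two sets differ only where the collection is never complete, and there `sInf ∅ = 0`. -/
theorem setOf_lt_ae_eq_setOf_not_isCovered (hm : 0 < m) {X : Ω → ℕ}
    (hX : ∀ ω, X ω = sInf {n | 1 ≤ n ∧ IsCovered G n ω})
    (hnever : μ {ω | ∀ n, ¬ IsCovered G n ω} = 0) (n : ℕ) :
    {ω | n < X ω} =ᵐ[μ] {ω | ¬ IsCovered G n ω} := by
  filter_upwards [measure_eq_zero_iff_ae_notMem.1 hnever] with ω hω
  obtain ⟨k, hk⟩ : ∃ k, IsCovered G k ω := by simpa using hω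
  have hset : {n | 1 ≤ n ∧ IsCovered G n ω} = {n | IsCovered G n ω} := by
    ext n
    refine ⟨And.right, fun hcov => ⟨Nat.one_le_iff_ne_zero.2 ?_, hcov⟩⟩
    rintro rfl
    exact not_isCovered_zero G hm ω hcov
  change (n < X ω) = ¬ IsCovered G n ω
  rw [hX, hset]
  exact propext <| Nat.lt_sInf_iff_not_of_monotone (isCovered_mono G ω) ⟨k, hk⟩

end GroupCouponCollector

open GroupCouponCollector in
/-- Uniform group coupon collector: at each step an i.i.d. uniformly random
`g`-element subset of `{1,...,m}` arrives.  The expected number of groups needed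
for every element to have appeared equals
`∑_{k=1}^{m-g} (-1)^(k+1) C(m,k)/(1 - C(m-k,g)/C(m,g)) + ∑_{k=1}^{g} (-1)^(m-g+k+1) C(m, m-g+k)`. -/
theorem stmt_10 {Ω : Type*} [MeasurableSpace Ω] (μ : Measure Ω) [IsProbabilityMeasure μ]
    {m g : ℕ} (hg1 : 1 ≤ g) (hgm : g < m)
    (G : ℕ → Ω → Finset (Fin m)) (hcard : ∀ n ω, (G n ω).card = g)
    (hindep : iIndepFun (m := fun _ => (⊤ : MeasurableSpace (Finset (Fin m)))) G μ)
    (hunif : ∀ n, 1 ≤ n → ∀ A : Finset (Fin m), A.card = g →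
      μ {ω | G n ω = A} = ENNReal.ofReal (1 / (m.choose g)))
    (X : Ω → ℕ)
    (hX : ∀ ω, X ω = sInf {n | 1 ≤ n ∧ ∀ i, ∃ k, 1 ≤ k ∧ k ≤ n ∧ i ∈ G k ω}) :
    ∫ ω, (X ω : ℝ) ∂μ =
      (∑ k ∈ Finset.Icc 1 (m - g), (-1 : ℝ) ^ (k + 1) * (m.choose k) /
        (1 - ((m - k).choose g : ℝ) / (m.choose g))) +
      ∑ k ∈ Finset.Icc 1 g, (-1 : ℝ) ^ (m - g + k + 1) * (m.choose (m - g + k)) := by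
  have hN : (0 : ℝ) < m.choose g := by exact_mod_cast Nat.choose_pos hgm.le
  have hG : IsUniformGroupSequence μ g G := ⟨hcard, hindep, fun n hn A hA => by
    rw [hunif n hn A hA, one_div, ENNReal.ofReal_inv_of_pos hN, ENNReal.ofReal_natCast]⟩
  have hlt := setOf_lt_ae_eq_setOf_not_isCovered (by omega) hX
    (hG.measure_setOf_forall_not_isCovered hg1 hgm.le)
  rw [integral_natCast_eq_tsum_measureReal_lt fun n =>
      (hG.nullMeasurableSet_not_isCovered n).congr (hlt n).symm]
  simp_rw [measureReal_congr (hlt _)]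
  rw [hG.tsum_measureReal_not_isCovered hg1 hgm.le,
    sum_Icc_one_eq_add_sum_Icc_one _ (Nat.sub_le m g), Nat.sub_sub_self hgm.le]
  congr 1
  refine sum_congr rfl fun k hk => ?_
  have hzero : (m - (m - g + k)).choose g = 0 := Nat.choose_eq_zero_of_lt (by grind)
  simp [hzero]
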